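/- arXiv:2106.00046 — 3 statements merged into one kernel-verified Lean document; each statement's English description precedes it below -/
import Mathlib

section
/- Let M be a loopless matroid on E of rank k, m ≥ 1, and Q = Q_m(M) with tip a. Then Q has rank k + 1, E is a flat of Q of rank k, and the only flat of Q properly containing E is the full ground set E(Q). -/
open Set Matroid

namespace ConePaper

variable {α : Type*}

/-- The rank of a set in a matroid: the supremum of sizes of independent subsets. -/
noncomputable def rk (M : Matroid α) (X : Set α) : ℕ :=
  sSup {n : ℕ | ∃ I, M.Indep I ∧ I ⊆ X ∧ I.ncard = n}

/-- A loopless matroid: every singleton of the ground set is independent. -/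
def Loopless (M : Matroid α) : Prop := ∀ e ∈ M.E, M.Indep {e}

/-- A coloop: an element of the ground set lying in every base. -/
def IsColoop (M : Matroid α) (e : α) : Prop := e ∈ M.E ∧ ∀ B, M.IsBase B → e ∈ B

/-- A circuit: a minimal dependent set. -/
def IsCircuit (M : Matroid α) (C : Set α) : Prop :=
  C ⊆ M.E ∧ ¬ M.Indep C ∧ ∀ x ∈ C, M.Indep (C \ {x})

/-- A cyclic flat: a flat whose restriction has no coloops. -/
def CyclicFlat (M : Matroid α) (F : Set α) : Prop :=
  M.IsFlat F ∧ ∀ e ∈ F, ¬ IsColoop (M ↾ F) e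

/-- Deletion of a set from a matroid. -/
def mdel (M : Matroid α) (X : Set α) : Matroid α := M ↾ (M.E \ X)

/-- The cone `q(S) = S ∪ {a} ∪ ⋃_{e ∈ S} T e`. -/
def cone (T : α → Set α) (a : α) (S : Set α) : Set α := S ∪ {a} ∪ ⋃ e ∈ S, T e

/-- The projection `p(S) = (S ∩ E) ∪ {e ∈ E : S ∩ T e ≠ ∅}`. -/
def proj (E : Set α) (T : α → Set α) (S : Set α) : Set α :=
  (S ∩ E) ∪ {e ∈ E | (S ∩ T e).Nonempty}

/-- `FreeCone M Q T a m` says that `Q` is the free `m`-cone of the loopless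
matroid `M`, with extra points `T e` (of size `m`) for `e ∈ M.E` and tip `a`:
its cyclic flats are those of `M` (with the same rank) together with the cones
of nonempty flats of `M` (with rank one greater). -/
structure FreeCone (M Q : Matroid α) (T : α → Set α) (a : α) (m : ℕ) : Prop where
  hm : 1 ≤ m
  hMfin : M.E.Finite
  hloopless : Loopless M
  hTfin : ∀ e ∈ M.E, (T e).Finite
  hTcard : ∀ e ∈ M.E, (T e).ncard = m
  hTdisjE : ∀ e ∈ M.E, Disjoint (T e) M.E
  hTdisj : ∀ e ∈ M.E, ∀ f ∈ M.E, e ≠ f → Disjoint (T e) (T f)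
  ha : a ∉ M.E ∪ ⋃ e ∈ M.E, T e
  hQE : Q.E = M.E ∪ (⋃ e ∈ M.E, T e) ∪ {a}
  hcyclic : ∀ F, CyclicFlat Q F ↔
      (CyclicFlat M F ∨ ∃ F', M.IsFlat F' ∧ F'.Nonempty ∧ F = cone T a F')
  hrank1 : ∀ F, CyclicFlat M F → rk Q F = rk M F
  hrank2 : ∀ F', M.IsFlat F' → F'.Nonempty → rk Q (cone T a F') = rk M F' + 1

/-- A flag of a rank-`k` matroid: a chain of flats, one of each rank `0,…,k`. -/
def IsFlag (N : Matroid α) (k : ℕ) (X : ℕ → Set α) : Prop :=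
  (∀ i ≤ k, N.IsFlat (X i) ∧ rk N (X i) = i) ∧ ∀ i < k, X i ⊂ X (i + 1)

/-! ### Auxiliary lemmas on ranks, circuits, and cyclic flats -/

lemma rk_bddAbove {N : Matroid α} (hE : N.E.Finite) (X : Set α) :
    BddAbove {n : ℕ | ∃ I, N.Indep I ∧ I ⊆ X ∧ I.ncard = n} :=
  ⟨N.E.ncard, fun n ⟨I, hI, _, hc⟩ => hc ▸ Set.ncard_le_ncard hI.subset_ground hE⟩

lemma le_rk {N : Matroid α} (hE : N.E.Finite) {I X : Set α} (hI : N.Indep I) (hIX : I ⊆ X) :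
    I.ncard ≤ rk N X :=
  le_csSup (rk_bddAbove hE X) ⟨I, hI, hIX, rfl⟩

lemma rk_basis {N : Matroid α} (hE : N.E.Finite) {I X : Set α} (hB : N.IsBasis I X) :
    rk N X = I.ncard := by
  refine le_antisymm (csSup_le ⟨0, ∅, N.empty_indep, empty_subset X, by simp⟩ ?_)
    (le_rk hE hB.indep hB.subset)
  rintro n ⟨J, hJ, hJX, rfl⟩
  obtain ⟨J', hJ', hJJ'⟩ := hJ.subset_isBasis_of_subset hJX hB.subset_ground
  have h1 : J'.encard = I.encard := hJ'.encard_eq_encard hB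
  have hJ'f : J'.Finite := hE.subset hJ'.indep.subset_ground
  calc J.ncard ≤ J'.ncard := Set.ncard_le_ncard hJJ' hJ'f
    _ = I.ncard := by rw [Set.ncard, Set.ncard, h1]

lemma flat_closure (N : Matroid α) (X : Set α) : N.IsFlat (N.closure X) := by
  refine ⟨fun I Y hI hIY => ?_, N.closure_subset_ground X⟩
  have h1 : N.closure I = N.closure (N.closure X) := hI.closure_eq_closure
  rw [N.closure_closure] at h1
  exact h1 ▸ hIY.subset_closure

lemma exists_circuit {N : Matroid α} (hE : N.E.Finite) {X : Set α} (hX : X ⊆ N.E)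
    (hdep : ¬ N.Indep X) : ∃ C, C ⊆ X ∧ IsCircuit N C := by
  obtain ⟨n, hn⟩ : ∃ n, X.ncard ≤ n := ⟨X.ncard, le_rfl⟩
  induction n generalizing X with
  | zero =>
    have hfin : X.Finite := hE.subset hX
    rw [Nat.le_zero, Set.ncard_eq_zero hfin] at hn
    exact absurd (hn ▸ N.empty_indep) hdep
  | succ n ih =>
    by_cases h : ∀ x ∈ X, N.Indep (X \ {x})
    · exact ⟨X, Subset.rfl, hX, hdep, h⟩
    · push_neg at h
      obtain ⟨x, hx, hdx⟩ := h
      have hfin : X.Finite := hE.subset hX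
      have hlt : (X \ {x}).ncard < X.ncard := Set.ncard_diff_singleton_lt_of_mem hx hfin
      obtain ⟨C, hC1, hC2⟩ := ih (diff_subset.trans hX) hdx (by omega)
      exact ⟨C, hC1.trans diff_subset, hC2⟩

lemma circuit_nonempty {N : Matroid α} {C : Set α} (hC : IsCircuit N C) : C.Nonempty := by
  rcases C.eq_empty_or_nonempty with rfl | h
  · exact absurd N.empty_indep hC.2.1
  · exact h

lemma circuit_basis_diff {N : Matroid α} {C : Set α} {x : α} (hC : IsCircuit N C) (hx : x ∈ C) :
    N.IsBasis (C \ {x}) (N.closure C) := by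
  have hI := hC.2.2 x hx
  have hxcl : x ∈ N.closure (C \ {x}) := by
    by_contra h
    have hind : N.Indep (insert x (C \ {x})) :=
      (hI.insert_indep_iff_of_notMem (by simp)).mpr ⟨hC.1 hx, h⟩
    rw [Set.insert_diff_singleton, Set.insert_eq_of_mem hx] at hind
    exact hC.2.1 hind
  have hcl : N.closure (C \ {x}) = N.closure C := by
    refine subset_antisymm (N.closure_subset_closure diff_subset)
      (N.closure_subset_closure_of_subset_closure ?_)
    intro y hy
    rcases eq_or_ne y x with rfl | hne
    · exact hxcl
    · exact N.subset_closure (C \ {x}) (diff_subset.trans hC.1) ⟨hy, hne⟩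
  rw [← hcl]
  exact hI.isBasis_closure

lemma circuit_closure_cyclicFlat {N : Matroid α} {C : Set α} (hC : IsCircuit N C) :
    CyclicFlat N (N.closure C) := by
  refine ⟨flat_closure N C, fun f _ hco => ?_⟩
  by_cases hfC : f ∈ C
  · exact (hco.2 _ ((circuit_basis_diff hC hfC).isBase_restrict)).2 rfl
  · obtain ⟨x, hx⟩ := circuit_nonempty hC
    exact hfC (hco.2 _ ((circuit_basis_diff hC hx).isBase_restrict)).1

lemma rk_circuit_closure {N : Matroid α} (hE : N.E.Finite) {C : Set α} (hC : IsCircuit N C) :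
    rk N (N.closure C) = C.ncard - 1 := by
  obtain ⟨x, hx⟩ := circuit_nonempty hC
  rw [rk_basis hE (circuit_basis_diff hC hx),
    Set.ncard_diff_singleton_of_mem hx]

/-! ### Auxiliary lemmas on free cones -/

lemma FreeCone.QE_finite {M Q : Matroid α} {T : α → Set α} {a : α} {m : ℕ}
    (hFC : FreeCone M Q T a m) : Q.E.Finite := by
  rw [hFC.hQE]
  exact ((hFC.hMfin.union (hFC.hMfin.biUnion hFC.hTfin)).union (finite_singleton a))

lemma FreeCone.ME_subset {M Q : Matroid α} {T : α → Set α} {a : α} {m : ℕ}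
    (hFC : FreeCone M Q T a m) : M.E ⊆ Q.E := by
  rw [hFC.hQE]
  exact subset_union_left.trans subset_union_left

lemma FreeCone.mem_of_mem_cone {M Q : Matroid α} {T : α → Set α} {a : α} {m : ℕ}
    (hFC : FreeCone M Q T a m) {F' : Set α} (hF' : M.IsFlat F') {y : α}
    (hyM : y ∈ M.E) (hy : y ∈ cone T a F') : y ∈ F' := by
  rcases hy with (hyF | hya) | hyT
  · exact hyF
  · rw [Set.mem_singleton_iff] at hya
    exact absurd (Or.inl (hya ▸ hyM)) hFC.ha
  · obtain ⟨e, heF', hyTe⟩ := Set.mem_iUnion₂.mp hyT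
    exact absurd hyM (Set.disjoint_left.mp (hFC.hTdisjE e (hF'.subset_ground heF')) hyTe)

lemma FreeCone.indep_iff {M Q : Matroid α} {T : α → Set α} {a : α} {m : ℕ}
    (hFC : FreeCone M Q T a m) {I : Set α} (hIE : I ⊆ M.E) :
    M.Indep I ↔ Q.Indep I := by
  have hQfin : Q.E.Finite := hFC.QE_finite
  have hMfin := hFC.hMfin
  constructor
  · intro hMI
    by_contra hdep
    obtain ⟨C, hCI, hC⟩ := exists_circuit hQfin (hIE.trans hFC.ME_subset) hdep
    have hCM : C ⊆ M.E := hCI.trans hIE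
    have hCfin : C.Finite := hMfin.subset hCM
    have hCpos : 0 < C.ncard := (Set.ncard_pos hCfin).mpr (circuit_nonempty hC)
    have hrkZ : rk Q (Q.closure C) = C.ncard - 1 := rk_circuit_closure hQfin hC
    have hCZ : C ⊆ Q.closure C := Q.subset_closure C hC.1
    rcases (hFC.hcyclic _).mp (circuit_closure_cyclicFlat hC) with hMZ | ⟨F', hF', hF'ne, hZ⟩
    · have h1 : rk Q (Q.closure C) = rk M (Q.closure C) := hFC.hrank1 _ hMZ
      have h2 : C.ncard ≤ rk M (Q.closure C) := le_rk hMfin (hMI.subset hCI) hCZ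
      omega
    · have hCF' : C ⊆ F' := fun y hy =>
        hFC.mem_of_mem_cone hF' (hCM hy) (hZ ▸ hCZ hy)
      have h2 : C.ncard ≤ rk M F' := le_rk hMfin (hMI.subset hCI) hCF'
      have h3 : rk Q (cone T a F') = rk M F' + 1 := hFC.hrank2 F' hF' hF'ne
      rw [hZ] at hrkZ
      omega
  · intro hQI
    by_contra hdep
    obtain ⟨C, hCI, hC⟩ := exists_circuit hMfin hIE hdep
    have hCfin : C.Finite := hMfin.subset hC.1
    have hCpos : 0 < C.ncard := (Set.ncard_pos hCfin).mpr (circuit_nonempty hC)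
    have h1 : rk Q (M.closure C) = rk M (M.closure C) :=
      hFC.hrank1 _ (circuit_closure_cyclicFlat hC)
    have h2 : rk M (M.closure C) = C.ncard - 1 := rk_circuit_closure hMfin hC
    have h3 : C.ncard ≤ rk Q (M.closure C) :=
      le_rk hQfin (hQI.subset hCI) (M.subset_closure C hC.1)
    omega

lemma FreeCone.closure_ME {M Q : Matroid α} {T : α → Set α} {a : α} {m : ℕ}
    (hFC : FreeCone M Q T a m) : Q.closure M.E = M.E := by
  have hQfin : Q.E.Finite := hFC.QE_finite
  have hMEQ : M.E ⊆ Q.E := hFC.ME_subset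
  refine subset_antisymm ?_ (Q.subset_closure M.E hMEQ)
  intro f hf
  by_contra hfME
  obtain ⟨B, hB⟩ := Q.exists_isBasis M.E hMEQ
  have hfclB : f ∈ Q.closure B := by rwa [hB.closure_eq_closure]
  have hfQ : f ∈ Q.E := Q.closure_subset_ground M.E hf
  have hfB : f ∉ B := fun h => hfME (hB.subset h)
  have hdep : ¬ Q.Indep (insert f B) := fun h =>
    ((hB.indep.insert_indep_iff_of_notMem hfB).mp h).2 hfclB
  have hsub : insert f B ⊆ Q.E := insert_subset hfQ hB.indep.subset_ground
  obtain ⟨C, hCsub, hC⟩ := exists_circuit hQfin hsub hdep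
  have hfC : f ∈ C := by
    by_contra hfC
    refine hC.2.1 (hB.indep.subset fun y hy => ?_)
    rcases hCsub hy with rfl | hyB
    · exact absurd hy hfC
    · exact hyB
  have hrkZ : rk Q (Q.closure C) = C.ncard - 1 := rk_circuit_closure hQfin hC
  have hCfin : C.Finite := hQfin.subset hC.1
  have hCpos : 0 < C.ncard := (Set.ncard_pos hCfin).mpr (circuit_nonempty hC)
  rcases (hFC.hcyclic _).mp (circuit_closure_cyclicFlat hC) with hMZ | ⟨F', hF', hF'ne, hZ⟩
  · exact hfME (hMZ.1.subset_ground (Q.subset_closure C hC.1 hfC))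
  · have hCB : C \ {f} ⊆ B := by
      rintro y ⟨hyC, hyf⟩
      rcases hCsub hyC with rfl | hyB
      · exact absurd rfl hyf
      · exact hyB
    have hCFsub : C \ {f} ⊆ F' := fun y hy =>
      hFC.mem_of_mem_cone hF' (hB.subset (hCB hy)) (hZ ▸ Q.subset_closure C hC.1 hy.1)
    have hindep : M.Indep (C \ {f}) :=
      (hFC.indep_iff (hCB.trans hB.subset)).mpr (hB.indep.subset hCB)
    have h2 : (C \ {f}).ncard ≤ rk M F' := le_rk hFC.hMfin hindep hCFsub
    have h3 : rk Q (cone T a F') = rk M F' + 1 := hFC.hrank2 F' hF' hF'ne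
    have h4 : (C \ {f}).ncard = C.ncard - 1 := Set.ncard_diff_singleton_of_mem hfC
    rw [hZ] at hrkZ
    omega

/-- The free `m`-cone has rank `k+1`, `E` is a rank-`k` flat of it, and the only
flat properly containing `E` is the whole ground set. -/
theorem cone_rank_and_ground_flat {M Q : Matroid α} {T : α → Set α} {a : α} {m k : ℕ}
    (hFC : FreeCone M Q T a m) (hk : rk M M.E = k) :
    rk Q Q.E = k + 1 ∧ Q.IsFlat M.E ∧ rk Q M.E = k ∧
      ∀ F, Q.IsFlat F → M.E ⊂ F → F = Q.E := by
  have hQfin : Q.E.Finite := hFC.QE_finite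
  have hMEQ : M.E ⊆ Q.E := hFC.ME_subset
  have hclME : Q.closure M.E = M.E := hFC.closure_ME
  have hflatME : Q.IsFlat M.E := hclME ▸ flat_closure Q M.E
  have hrkME : rk Q M.E = k := by
    rw [← hk]
    unfold rk
    congr 1
    ext n
    constructor
    · rintro ⟨I, hI, hIX, rfl⟩
      exact ⟨I, (hFC.indep_iff hIX).mpr hI, hIX, rfl⟩
    · rintro ⟨I, hI, hIX, rfl⟩
      exact ⟨I, (hFC.indep_iff hIX).mp hI, hIX, rfl⟩
  have hrkQ : rk Q Q.E = k + 1 := by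
    rcases M.E.eq_empty_or_nonempty with hME | hME
    · have hk0 : k = 0 := by
        rw [← hk]
        refine le_antisymm (csSup_le ⟨0, ∅, M.empty_indep, by simp, by simp⟩ ?_) (Nat.zero_le _)
        rintro n ⟨I, hI, hIX, rfl⟩
        rw [hME, Set.subset_empty_iff] at hIX
        simp [hIX]
      have hQa : Q.E = {a} := by rw [hFC.hQE, hME]; simp
      have hind : Q.Indep {a} := by
        by_contra hdep
        obtain ⟨C, hCsub, hC⟩ := exists_circuit hQfin (by rw [hQa]) hdep
        have hCa : a ∈ C := by
          obtain ⟨x, hx⟩ := circuit_nonempty hC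
          have hxa : x = a := hCsub hx
          rwa [hxa] at hx
        rcases (hFC.hcyclic _).mp (circuit_closure_cyclicFlat hC) with hMZ | ⟨F', hF', hF'ne, hZ⟩
        · exact hFC.ha (Or.inl (hMZ.1.subset_ground (Q.subset_closure C hC.1 hCa)))
        · obtain ⟨x, hx⟩ := hF'ne
          have : x ∈ M.E := hF'.subset_ground hx
          rw [hME] at this
          exact this
      rw [hQa, hk0, rk_basis hQfin hind.isBasis_self, Set.ncard_singleton]
    · have hcone : cone T a M.E = Q.E := by
        rw [hFC.hQE]
        unfold cone
        ext x
        simp only [Set.mem_union, Set.mem_singleton_iff]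
        tauto
      have h := hFC.hrank2 M.E (ground_isFlat M) hME
      rw [hcone, hk] at h
      exact h
  refine ⟨hrkQ, hflatME, hrkME, fun F hF hssub => ?_⟩
  obtain ⟨f, hfF, hfME⟩ := Set.exists_of_ssubset hssub
  obtain ⟨B, hB⟩ := Q.exists_isBasis M.E hMEQ
  have hBk : B.ncard = k := by rw [← hrkME, rk_basis hQfin hB]
  have hfQ : f ∈ Q.E := hF.subset_ground hfF
  have hfB : f ∉ B := fun h => hfME (hB.subset h)
  have hfcl : f ∉ Q.closure B := by rw [hB.closure_eq_closure, hclME]; exact hfME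
  have hind : Q.Indep (insert f B) :=
    (hB.indep.insert_indep_iff_of_notMem hfB).mpr ⟨hfQ, hfcl⟩
  have hBfin : B.Finite := hQfin.subset hB.indep.subset_ground
  have hcard : (insert f B).ncard = k + 1 := by
    rw [Set.ncard_insert_of_notMem hfB hBfin, hBk]
  obtain ⟨B'', hB'', hsub⟩ := hind.exists_isBase_superset
  have hB''card : B''.ncard = k + 1 := by
    rw [← hrkQ, rk_basis hQfin hB''.isBasis_ground]
  have heq : insert f B = B'' :=
    Set.eq_of_subset_of_ncard_le hsub (by omega) (hQfin.subset hB''.subset_ground)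
  have hclose : Q.closure (insert f B) = Q.E := by rw [heq]; exact hB''.closure_eq
  have hsubF : insert f B ⊆ F := insert_subset hfF (hB.subset.trans hssub.subset)
  have hQEF : Q.E ⊆ F := by
    rw [← hclose, ← hF.closure]
    exact Q.closure_subset_closure hsubF
  exact subset_antisymm hF.subset_ground hQEF

end ConePaper
end

section
/- Let M be a matroid on a finite set E of size n. For nonnegative integers s ≥ t ≥ c, let F(s,t,c) be the number of subsets X ⊆ E with |X| = s, r(X) = t, and exactly c coloops in M|X; and let G(s,t,c) be the number of permutations π of E such that the rank sequence of π has exactly t ones among its first s entries, with its entries in positions s-c+1 through s all equal to one. Then ∑_{c' ≥ c} F(s,t,c') · C(c',c) · c! · (s-c)! · (n-s)! = G(s,t,c). -/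
open Set Matroid

namespace ConePaper

variable {α : Type*}

variable {M : Matroid α} {X Y I J S : Set α} {e : α}

lemma rk_eq_ncard_of_basis (hXfin : X.Finite) (hI : M.IsBasis I X) : rk M X = I.ncard := by
  have hub : ∀ m ∈ {n : ℕ | ∃ J, M.Indep J ∧ J ⊆ X ∧ J.ncard = n}, m ≤ I.ncard := by
    rintro m ⟨J, hJ, hJX, rfl⟩
    obtain ⟨I', hI', hJI'⟩ := hJ.subset_isBasis_of_subset hJX hI.subset_ground
    have hI'fin : I'.Finite := hXfin.subset hI'.subset
    have he : I'.encard = I.encard := hI'.encard_eq_encard hI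
    have : I'.ncard = I.ncard := by
      rw [Set.ncard_def, Set.ncard_def, he]
    exact le_trans (Set.ncard_le_ncard hJI' hI'fin) this.le
  refine le_antisymm (csSup_le ⟨I.ncard, I, hI.indep, hI.subset, rfl⟩ hub) ?_
  exact le_csSup ⟨I.ncard, hub⟩ ⟨I, hI.indep, hI.subset, rfl⟩

lemma ncard_le_rk_of_indep (hJ : M.Indep J) (hJX : J ⊆ X) (hX : X ⊆ M.E)
    (hXfin : X.Finite) : J.ncard ≤ rk M X := by
  obtain ⟨I, hI⟩ := M.exists_isBasis X hX
  rw [rk_eq_ncard_of_basis hXfin hI]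
  obtain ⟨I', hI', hJI'⟩ := hJ.subset_isBasis_of_subset hJX hX
  have : I'.ncard = I.ncard := by
    rw [Set.ncard_def, Set.ncard_def, hI'.encard_eq_encard hI]
  exact le_trans (Set.ncard_le_ncard hJI' (hXfin.subset hI'.subset)) this.le

lemma rk_le_ncard (hX : X ⊆ M.E) (hXfin : X.Finite) : rk M X ≤ X.ncard := by
  obtain ⟨I, hI⟩ := M.exists_isBasis X hX
  rw [rk_eq_ncard_of_basis hXfin hI]
  exact Set.ncard_le_ncard hI.subset hXfin

lemma rk_mono (hXY : X ⊆ Y) (hY : Y ⊆ M.E) (hYfin : Y.Finite) : rk M X ≤ rk M Y := by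
  obtain ⟨I, hI⟩ := M.exists_isBasis X (hXY.trans hY)
  rw [rk_eq_ncard_of_basis (hYfin.subset hXY) hI]
  exact ncard_le_rk_of_indep hI.indep (hI.subset.trans hXY) hY hYfin

lemma rk_empty (M : Matroid α) : rk M ∅ = 0 := by
  have h := rk_eq_ncard_of_basis (M := M) finite_empty (I := ∅) ?_
  · simpa using h
  · simpa using M.empty_indep.isBasis_self

lemma rk_insert_le (h : insert e X ⊆ M.E) (hfin : X.Finite) :
    rk M (insert e X) ≤ rk M X + 1 := by
  obtain ⟨J, hJ⟩ := M.exists_isBasis (insert e X) h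
  rw [rk_eq_ncard_of_basis (hfin.insert e) hJ]
  have hJfin : J.Finite := (hfin.insert e).subset hJ.subset
  have h1 : (J \ {e}).ncard ≤ rk M X := by
    refine ncard_le_rk_of_indep (hJ.indep.subset diff_subset) ?_
      (fun x hx => h (mem_insert_of_mem _ hx)) hfin
    intro x hx
    rcases hJ.subset hx.1 with h' | h'
    · exact absurd h' hx.2
    · exact h'
  by_cases heJ : e ∈ J
  · rw [← Set.ncard_diff_singleton_add_one heJ hJfin]; omega
  · rw [Set.diff_singleton_eq_self heJ] at h1; omega

lemma rk_union_le (hA : X ⊆ M.E) (hAfin : X.Finite) (hBfin : Y.Finite) (hB : Y ⊆ M.E) :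
    rk M (X ∪ Y) ≤ rk M X + Y.ncard := by
  revert hB
  refine Set.Finite.induction_on (motive := fun Y _ =>
    Y ⊆ M.E → rk M (X ∪ Y) ≤ rk M X + Y.ncard) Y hBfin (by simp) ?_
  intro a s has hsfin ih hB
  have hs : s ⊆ M.E := fun x hx => hB (mem_insert_of_mem _ hx)
  have h1 : rk M (X ∪ insert a s) ≤ rk M (X ∪ s) + 1 := by
    rw [Set.union_insert]
    exact rk_insert_le (by rw [← Set.union_insert]; exact union_subset hA hB)
      (hAfin.union hsfin)
  have h2 := ih hs
  rw [Set.ncard_insert_of_notMem has hsfin]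
  omega


lemma coloops_subset_basis (hX : X ⊆ M.E) (hJ : M.IsBasis J X)
    (hS : S ⊆ {e ∈ X | IsColoop (M ↾ X) e}) : S ⊆ J := by
  intro x hx
  exact (hS hx).2.2 J ((isBase_restrict_iff hX).mpr hJ)

lemma rk_diff_coloops (hX : X ⊆ M.E) (hXfin : X.Finite)
    (hS : S ⊆ {e ∈ X | IsColoop (M ↾ X) e}) :
    rk M (X \ S) + S.ncard = rk M X := by
  have hSX : S ⊆ X := fun x hx => (hS hx).1
  have hSfin : S.Finite := hXfin.subset hSX
  obtain ⟨I, hI⟩ := M.exists_isBasis (X \ S) ((diff_subset.trans hX))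
  obtain ⟨J, hJ, hIJ⟩ := hI.indep.subset_isBasis_of_subset (hI.subset.trans diff_subset) hX
  have hJfin : J.Finite := hXfin.subset hJ.subset
  have hSJ : S ⊆ J := coloops_subset_basis hX hJ hS
  have hIJS : I ⊆ J \ S := fun x hx => ⟨hIJ hx, (hI.subset hx).2⟩
  have h1 : (J \ S).ncard ≤ rk M (X \ S) :=
    ncard_le_rk_of_indep (hJ.indep.subset diff_subset)
      (fun x hx => ⟨hJ.subset hx.1, hx.2⟩) (diff_subset.trans hX) (hXfin.diff)
  have h2 : rk M (X \ S) = I.ncard := rk_eq_ncard_of_basis (hXfin.diff) hI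
  have h3 : I.ncard ≤ (J \ S).ncard := Set.ncard_le_ncard hIJS (hJfin.diff)
  have h4 : (J \ S).ncard = J.ncard - S.ncard := Set.ncard_diff hSJ hSfin
  have h5 : S.ncard ≤ J.ncard := Set.ncard_le_ncard hSJ hJfin
  have h6 : rk M X = J.ncard := rk_eq_ncard_of_basis hXfin hJ
  omega

lemma isColoop_iff_rk (hX : X ⊆ M.E) (hXfin : X.Finite) (he : e ∈ X) :
    IsColoop (M ↾ X) e ↔ rk M (X \ {e}) + 1 = rk M X := by
  constructor
  · intro hcl
    have := rk_diff_coloops hX hXfin (S := {e}) (by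
      rintro x rfl; exact ⟨he, hcl⟩)
    simpa using this
  · intro hrk
    refine ⟨by simpa using he, fun B hB => ?_⟩
    by_contra heB
    have hBbasis : M.IsBasis B X := (isBase_restrict_iff hX).mp hB
    have hBsub : B ⊆ X \ {e} := fun x hx => ⟨hBbasis.subset hx, fun h => heB (h ▸ hx)⟩
    have h1 : B.ncard ≤ rk M (X \ {e}) :=
      ncard_le_rk_of_indep hBbasis.indep hBsub (diff_subset.trans hX) (hXfin.diff)
    have h2 : rk M X = B.ncard := rk_eq_ncard_of_basis hXfin hBbasis
    omega


section FinSide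
variable {n s c : ℕ} {π : Fin n → α}

lemma ncard_fin_interval {k m : ℕ} (hk : k ≤ n) :
    {j : Fin n | m ≤ (j : ℕ) ∧ (j : ℕ) < k}.ncard = k - m := by
  rw [← Nat.card_coe_set_eq]
  have e : {j : Fin n | m ≤ (j : ℕ) ∧ (j : ℕ) < k} ≃ Fin (k - m) :=
    { toFun := fun j => ⟨j.1.1 - m, by obtain ⟨h1, h2⟩ := j.2; omega⟩
      invFun := fun i => ⟨⟨m + i.1, by have := i.isLt; omega⟩,
        ⟨Nat.le_add_right _ _, by have := i.isLt; exact (by omega : m + i.1 < k)⟩⟩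
      left_inv := fun j => Subtype.ext (Fin.ext (by
        obtain ⟨h1, h2⟩ := j.2
        exact (by omega : m + (j.1.1 - m) = j.1.1)))
      right_inv := fun i => Fin.ext (by
        exact (by omega : m + i.1 - m = i.1)) }
  rw [Nat.card_congr e]
  simp

lemma le_set_eq (i : Fin n) : {j : Fin n | j ≤ i} = {j : Fin n | (j : ℕ) < (i : ℕ) + 1} := by
  ext j; exact ⟨fun h => Nat.lt_succ_of_le h, fun h => Nat.lt_succ_iff.mp h⟩

lemma lt_set_eq (i : Fin n) : {j : Fin n | j < i} = {j : Fin n | (j : ℕ) < (i : ℕ)} := by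
  ext j; exact Iff.rfl

variable {M : Matroid α}

lemma prefix_subset_ground (hrange : Set.range π = M.E) (k : ℕ) :
    π '' {j : Fin n | (j : ℕ) < k} ⊆ M.E := by
  rw [← hrange]; exact Set.image_subset_range _ _

lemma prefix_succ_eq {k : ℕ} (hk : k < n) :
    π '' {j : Fin n | (j : ℕ) < k + 1}
      = insert (π ⟨k, hk⟩) (π '' {j : Fin n | (j : ℕ) < k}) := by
  ext x
  simp only [Set.mem_image, Set.mem_insert_iff, Set.mem_setOf_eq]
  constructor
  · rintro ⟨j, hj, rfl⟩
    rcases Nat.lt_succ_iff_lt_or_eq.mp hj with h | h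
    · exact Or.inr ⟨j, h, rfl⟩
    · exact Or.inl (by rw [show j = (⟨k, hk⟩ : Fin n) from Fin.ext h])
  · rintro (rfl | ⟨j, hj, rfl⟩)
    · exact ⟨⟨k, hk⟩, by simp, rfl⟩
    · exact ⟨j, by omega, rfl⟩

lemma incr_iff (i : Fin n) :
    (rk M (π '' {j | j ≤ i}) = rk M (π '' {j | j < i}) + 1)
      ↔ rk M (π '' {j : Fin n | (j : ℕ) < (i : ℕ) + 1})
          = rk M (π '' {j : Fin n | (j : ℕ) < (i : ℕ)}) + 1 := by
  rw [le_set_eq, lt_set_eq]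

lemma telescope (hrange : Set.range π = M.E) (hEfin : M.E.Finite)
    {k : ℕ} (hk : k ≤ n) :
    (Finset.univ.filter fun i : Fin n => (i : ℕ) < k ∧
        rk M (π '' {j | j ≤ i}) = rk M (π '' {j | j < i}) + 1).card
      = rk M (π '' {j : Fin n | (j : ℕ) < k}) := by
  induction k with
  | zero =>
    have : π '' {j : Fin n | (j : ℕ) < 0} = ∅ := by simp
    rw [this, rk_empty]
    simp
  | succ k ih =>
    have hkn : k < n := hk
    have ihv := ih (Nat.le_of_succ_le hk)
    have hYsub := prefix_subset_ground (M := M) hrange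
    have hYfin : ∀ m, (π '' {j : Fin n | (j : ℕ) < m}).Finite :=
      fun m => hEfin.subset (hYsub m)
    have hmono : rk M (π '' {j : Fin n | (j : ℕ) < k})
        ≤ rk M (π '' {j : Fin n | (j : ℕ) < k + 1}) :=
      rk_mono (Set.image_mono (fun j hj => by
        simp only [Set.mem_setOf_eq] at *; omega)) (hYsub _) (hYfin _)
    have hle : rk M (π '' {j : Fin n | (j : ℕ) < k + 1})
        ≤ rk M (π '' {j : Fin n | (j : ℕ) < k}) + 1 := by
      rw [prefix_succ_eq hkn]
      exact rk_insert_le (by rw [← prefix_succ_eq hkn]; exact hYsub _) (hYfin _)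
    set i₀ : Fin n := ⟨k, hkn⟩ with hi₀
    by_cases hcase : rk M (π '' {j : Fin n | (j : ℕ) < k + 1})
        = rk M (π '' {j : Fin n | (j : ℕ) < k}) + 1
    · have hset : (Finset.univ.filter fun i : Fin n => (i : ℕ) < k + 1 ∧
          rk M (π '' {j | j ≤ i}) = rk M (π '' {j | j < i}) + 1)
          = insert i₀ (Finset.univ.filter fun i : Fin n => (i : ℕ) < k ∧
            rk M (π '' {j | j ≤ i}) = rk M (π '' {j | j < i}) + 1) := by
        ext i
        simp only [Finset.mem_filter, Finset.mem_insert, Finset.mem_univ, true_and]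
        constructor
        · rintro ⟨h1, h2⟩
          by_cases hik : (i : ℕ) = k
          · exact Or.inl (Fin.ext hik)
          · exact Or.inr ⟨by omega, h2⟩
        · rintro (rfl | ⟨h1, h2⟩)
          · exact ⟨by simp [hi₀], (incr_iff i₀).mpr (by simpa [hi₀] using hcase)⟩
          · exact ⟨by omega, h2⟩
      rw [hset, Finset.card_insert_of_notMem (by simp [hi₀]), ihv, ← hcase]
    · have hcase' : rk M (π '' {j : Fin n | (j : ℕ) < k + 1})
          = rk M (π '' {j : Fin n | (j : ℕ) < k}) := by omega
      have hset : (Finset.univ.filter fun i : Fin n => (i : ℕ) < k + 1 ∧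
          rk M (π '' {j | j ≤ i}) = rk M (π '' {j | j < i}) + 1)
          = (Finset.univ.filter fun i : Fin n => (i : ℕ) < k ∧
            rk M (π '' {j | j ≤ i}) = rk M (π '' {j | j < i}) + 1) := by
        ext i
        simp only [Finset.mem_filter, Finset.mem_univ, true_and]
        constructor
        · rintro ⟨h1, h2⟩
          refine ⟨?_, h2⟩
          by_cases hik : (i : ℕ) = k
          · exfalso
            have : i = i₀ := Fin.ext hik
            subst this
            rw [incr_iff] at h2
            simp only [hi₀] at h2
            omega
          · omega
        · rintro ⟨h1, h2⟩; exact ⟨by omega, h2⟩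
      rw [hset, ihv, hcase']


lemma prefix_diff_eq (hinj : Function.Injective π) {m : ℕ} (hm : m ≤ s) :
    π '' {j : Fin n | (j : ℕ) < m}
      = (π '' {j : Fin n | (j : ℕ) < s}) \ (π '' {j : Fin n | m ≤ (j : ℕ) ∧ (j : ℕ) < s}) := by
  have hset : {j : Fin n | (j : ℕ) < m}
      = {j : Fin n | (j : ℕ) < s} \ {j : Fin n | m ≤ (j : ℕ) ∧ (j : ℕ) < s} := by
    ext j
    show (j : ℕ) < m ↔ (j : ℕ) < s ∧ ¬ (m ≤ (j : ℕ) ∧ (j : ℕ) < s)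
    omega
  rw [hset, Set.image_diff hinj]

lemma chain_rk (hinj : Function.Injective π) (hrange : Set.range π = M.E)
    (hEfin : M.E.Finite) (hsn : s ≤ n) (hcs : c ≤ s)
    (htail : ∀ i : Fin n, s - c ≤ (i : ℕ) → (i : ℕ) < s →
      rk M (π '' {j | j ≤ i}) = rk M (π '' {j | j < i}) + 1)
    {d : ℕ} (hd : d ≤ c) :
    rk M (π '' {j : Fin n | (j : ℕ) < s - d}) + d
      = rk M (π '' {j : Fin n | (j : ℕ) < s}) := by
  induction d with
  | zero => simp
  | succ d ih =>
    have ihv := ih (Nat.le_of_succ_le hd)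
    have hi : s - d - 1 < n := by omega
    set i : Fin n := ⟨s - d - 1, hi⟩ with hidef
    have h1 := htail i (by simp [hidef]; omega) (by simp [hidef]; omega)
    rw [incr_iff] at h1
    have hv : (i : ℕ) = s - d - 1 := rfl
    rw [hv] at h1
    have e1 : s - d - 1 + 1 = s - d := by omega
    have e2 : s - d - 1 = s - (d + 1) := by omega
    rw [e1, e2] at h1
    omega

lemma tail_iff (hinj : Function.Injective π) (hrange : Set.range π = M.E)
    (hEfin : M.E.Finite) (hsn : s ≤ n) (hcs : c ≤ s) :
    (∀ i : Fin n, s - c ≤ (i : ℕ) → (i : ℕ) < s →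
        rk M (π '' {j | j ≤ i}) = rk M (π '' {j | j < i}) + 1)
      ↔ (∀ i : Fin n, s - c ≤ (i : ℕ) → (i : ℕ) < s →
          π i ∈ {e ∈ π '' {j : Fin n | (j : ℕ) < s} |
            IsColoop (M ↾ (π '' {j : Fin n | (j : ℕ) < s})) e}) := by
  set X : Set α := π '' {j : Fin n | (j : ℕ) < s} with hXdef
  have hXsub : X ⊆ M.E := prefix_subset_ground hrange s
  have hXfin : X.Finite := hEfin.subset hXsub
  constructor
  · intro htail i h1 h2
    have hmemX : π i ∈ X := ⟨i, h2, rfl⟩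
    refine ⟨hmemX, ?_⟩
    rw [isColoop_iff_rk hXsub hXfin hmemX]
    -- X \ {π i} = (prefix i) ∪ (suffix after i)
    have hsplit : X \ {π i}
        = (π '' {j : Fin n | (j : ℕ) < (i : ℕ)})
          ∪ (π '' {j : Fin n | (i : ℕ) + 1 ≤ (j : ℕ) ∧ (j : ℕ) < s}) := by
      have hset2 : {j : Fin n | (j : ℕ) < s} \ ({i} : Set (Fin n))
          = {j : Fin n | (j : ℕ) < (i : ℕ)}
            ∪ {j : Fin n | (i : ℕ) + 1 ≤ (j : ℕ) ∧ (j : ℕ) < s} := by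
        ext j
        show ((j : ℕ) < s ∧ ¬ j = i) ↔ _
        rw [Set.mem_union]
        have hji : (j = i) ↔ ((j : ℕ) = (i : ℕ)) := Fin.ext_iff
        rw [hji]
        show _ ↔ ((j : ℕ) < (i : ℕ) ∨ ((i : ℕ) + 1 ≤ (j : ℕ) ∧ (j : ℕ) < s))
        omega
      have hsingle : ({π i} : Set α) = π '' ({i} : Set (Fin n)) := by simp
      rw [hsingle, ← Set.image_diff hinj, hset2, Set.image_union]
    have hZcard : (π '' {j : Fin n | (i : ℕ) + 1 ≤ (j : ℕ) ∧ (j : ℕ) < s}).ncard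
        = s - ((i : ℕ) + 1) := by
      rw [Set.ncard_image_of_injective _ hinj, ncard_fin_interval hsn]
    have hub : rk M (X \ {π i}) ≤ rk M (π '' {j : Fin n | (j : ℕ) < (i : ℕ)})
        + (s - ((i : ℕ) + 1)) := by
      rw [hsplit, ← hZcard]
      exact rk_union_le (prefix_subset_ground hrange _) (hEfin.subset (prefix_subset_ground hrange _))
        (hEfin.subset (by rw [← hrange]; exact Set.image_subset_range _ _))
        (by rw [← hrange]; exact Set.image_subset_range _ _)
    have hchain := chain_rk hinj hrange hEfin hsn hcs htail (d := s - (i : ℕ)) (by omega)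
    have hid : s - (s - (i : ℕ)) = (i : ℕ) := by omega
    rw [hid, ← hXdef] at hchain
    have hlb : rk M X ≤ rk M (X \ {π i}) + 1 := by
      have hXeq : insert (π i) (X \ {π i}) = X := by
        rw [Set.insert_diff_singleton, Set.insert_eq_self.mpr hmemX]
      calc rk M X = rk M (insert (π i) (X \ {π i})) := by rw [hXeq]
        _ ≤ rk M (X \ {π i}) + 1 := rk_insert_le (by rw [hXeq]; exact hXsub) (hXfin.diff)
    have h2' : (i : ℕ) < s := h2
    omega
  · intro hcl i h1 h2
    rw [incr_iff]
    have key : ∀ m, s - c ≤ m → m ≤ s →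
        rk M (π '' {j : Fin n | (j : ℕ) < m}) + (s - m) = rk M X := by
      intro m hm1 hm2
      have hSsub : (π '' {j : Fin n | m ≤ (j : ℕ) ∧ (j : ℕ) < s})
          ⊆ {e ∈ X | IsColoop (M ↾ X) e} := by
        rintro x ⟨j, ⟨hj1, hj2⟩, rfl⟩
        exact hcl j (by omega) hj2
      have := rk_diff_coloops hXsub hXfin hSsub
      rw [← prefix_diff_eq hinj hm2] at this
      rw [Set.ncard_image_of_injective _ hinj, ncard_fin_interval hsn] at this
      omega
    have k1 := key ((i : ℕ) + 1) (by omega) (by omega)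
    have k2 := key (i : ℕ) (by omega) (by omega)
    have h2' : (i : ℕ) < s := h2
    omega

end FinSide

section Counting

def splitEquiv {β : Type*} {k l m : ℕ} (h : k + l = m) :
    (Fin m → β) ≃ (Fin k → β) × (Fin l → β) where
  toFun f := (fun i => f ⟨i.1, by have := i.isLt; omega⟩,
    fun j => f ⟨k + j.1, by have := j.isLt; omega⟩)
  invFun p j := if hj : j.1 < k then p.1 ⟨j.1, hj⟩
    else p.2 ⟨j.1 - k, by have := j.isLt; omega⟩
  left_inv f := by
    funext j
    dsimp only
    by_cases hj : (j : ℕ) < k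
    · rw [dif_pos hj]
    · rw [dif_neg hj]
      exact congrArg f (Fin.ext (by
        have := j.isLt; show k + ((j : ℕ) - k) = (j : ℕ); omega))
  right_inv p := by
    refine Prod.ext ?_ ?_
    · funext i
      dsimp only
      rw [dif_pos i.isLt]
    · funext j
      dsimp only
      have h1 : ¬ (k + (j : ℕ) < k) := by omega
      rw [dif_neg h1]
      exact congrArg p.2 (Fin.ext (by show k + (j : ℕ) - k = (j : ℕ); omega))

noncomputable def permEquiv {k : ℕ} (S : Set α) :
    {f : Fin k → α // Function.Injective f ∧ Set.range f = S} ≃ (Fin k ≃ ↥S) where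
  toFun f := (Equiv.ofInjective f.1 f.2.1).trans (Equiv.setCongr f.2.2)
  invFun e := ⟨fun i => (e i).1, fun i j hij => e.injective (Subtype.ext hij), by
    ext x
    constructor
    · rintro ⟨i, rfl⟩; exact (e i).2
    · intro hx; exact ⟨e.symm ⟨x, hx⟩, by simp⟩⟩
  left_inv f := Subtype.ext (funext fun i => rfl)
  right_inv e := Equiv.ext fun i => Subtype.ext rfl

lemma card_perm {k : ℕ} (S : Set α) (hS : S.Finite) (hk : S.ncard = k) :
    Nat.card {f : Fin k → α // Function.Injective f ∧ Set.range f = S} = k.factorial := by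
  classical
  haveI := hS.fintype
  have hcard : Fintype.card ↥S = k := by
    rw [← hk, Set.ncard_eq_toFinset_card', Set.toFinset_card]
  have e0 : Fin k ≃ ↥S := (Fintype.equivFinOfCardEq hcard).symm
  rw [Nat.card_congr (permEquiv S), Nat.card_eq_fintype_card, Fintype.card_equiv e0]
  simp

noncomputable def embEquiv (c : ℕ) (CL : Set α) :
    {g : Fin c → α // Function.Injective g ∧ Set.range g ⊆ CL} ≃ (Fin c ↪ ↥CL) where
  toFun g := ⟨fun i => ⟨g.1 i, g.2.2 (Set.mem_range_self i)⟩,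
    fun i j hij => g.2.1 (congrArg Subtype.val hij)⟩
  invFun e := ⟨fun i => (e i).1, fun i j hij => e.injective (Subtype.ext hij), by
    rintro x ⟨i, rfl⟩; exact (e i).2⟩
  left_inv g := Subtype.ext (funext fun i => rfl)
  right_inv e := by ext i; rfl

lemma card_emb (c : ℕ) (CL : Set α) (hCL : CL.Finite) :
    Nat.card {g : Fin c → α // Function.Injective g ∧ Set.range g ⊆ CL}
      = (CL.ncard).descFactorial c := by
  classical
  haveI := hCL.fintype
  have hcard : Fintype.card ↥CL = CL.ncard := by
    rw [Set.ncard_eq_toFinset_card', Set.toFinset_card]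
  rw [Nat.card_congr (embEquiv c CL), Nat.card_eq_fintype_card,
    Fintype.card_embedding_eq, hcard, Fintype.card_fin]

def prodSubtypeSigmaEquiv {A B : Type*} (P : B → Prop) (Q : B → A → Prop) :
    {p : A × B // P p.2 ∧ Q p.2 p.1} ≃ Σ b : Subtype P, {a : A // Q b.1 a} where
  toFun p := ⟨⟨p.1.2, p.2.1⟩, p.1.1, p.2.2⟩
  invFun x := ⟨(x.2.1, x.1.1), x.1.2, x.2.2⟩
  left_inv p := rfl
  right_inv x := rfl

lemma nat_card_sigma {ι : Type*} [Fintype ι] (f : ι → Type*) [∀ i, Finite (f i)] :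
    Nat.card (Sigma f) = ∑ i : ι, Nat.card (f i) := by
  classical
  letI : ∀ i, Fintype (f i) := fun i => Fintype.ofFinite (f i)
  simp [Nat.card_eq_fintype_card]

end Counting

section SplitFacts
variable {k l m : ℕ}

lemma split_image_eq (h : k + l = m) (f : Fin m → α) :
    f '' {j : Fin m | (j : ℕ) < k} = Set.range ((splitEquiv h f).1) := by
  ext x
  constructor
  · rintro ⟨j, hj, rfl⟩
    exact ⟨⟨j.1, hj⟩, congrArg f (Fin.ext rfl)⟩
  · rintro ⟨i, rfl⟩
    exact ⟨⟨i.1, by have := i.isLt; omega⟩, i.isLt, congrArg f (Fin.ext rfl)⟩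

lemma split_range_eq (h : k + l = m) (f : Fin m → α) :
    Set.range f = Set.range ((splitEquiv h f).1) ∪ Set.range ((splitEquiv h f).2) := by
  ext x
  constructor
  · rintro ⟨j, rfl⟩
    by_cases hj : (j : ℕ) < k
    · exact Or.inl ⟨⟨j.1, hj⟩, congrArg f (Fin.ext rfl)⟩
    · refine Or.inr ⟨⟨j.1 - k, by have := j.isLt; omega⟩, congrArg f (Fin.ext ?_)⟩
      show k + ((j : ℕ) - k) = (j : ℕ)
      omega
  · rintro (⟨i, rfl⟩ | ⟨i, rfl⟩)
    · exact ⟨⟨i.1, by have := i.isLt; omega⟩, congrArg f (Fin.ext rfl)⟩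
    · exact ⟨⟨k + i.1, by have := i.isLt; omega⟩, congrArg f (Fin.ext rfl)⟩

lemma split_inj_iff (h : k + l = m) (f : Fin m → α) :
    Function.Injective f ↔
      (Function.Injective ((splitEquiv h f).1) ∧ Function.Injective ((splitEquiv h f).2) ∧
        ∀ x, x ∈ Set.range ((splitEquiv h f).1) → x ∈ Set.range ((splitEquiv h f).2) → False) := by
  constructor
  · intro hf
    refine ⟨fun i i' hii => ?_, fun j j' hjj => ?_, ?_⟩
    · have h3 := hf hii
      simp only [Fin.mk.injEq] at h3
      exact Fin.ext h3
    · have h3 := hf hjj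
      simp only [Fin.mk.injEq] at h3
      exact Fin.ext (by omega)
    · rintro x ⟨i, rfl⟩ ⟨j, hj⟩
      have h3 := hf hj
      simp only [Fin.mk.injEq] at h3
      have := i.isLt
      omega
  · rintro ⟨ha, hb, hd⟩ j j' hjj
    by_cases hj : (j : ℕ) < k <;> by_cases hj' : (j' : ℕ) < k
    · have h3 : (⟨j.1, hj⟩ : Fin k) = ⟨j'.1, hj'⟩ := ha (by
        show f _ = f _
        exact (congrArg f (Fin.ext rfl)).trans (hjj.trans (congrArg f (Fin.ext rfl))))
      simp only [Fin.mk.injEq] at h3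
      exact Fin.ext h3
    · exact (hd (f j) ⟨⟨j.1, hj⟩, congrArg f (Fin.ext rfl)⟩
        ⟨⟨j'.1 - k, by have := j'.isLt; omega⟩,
          (congrArg f (Fin.ext (by show k + ((j' : ℕ) - k) = (j' : ℕ); omega))).trans
            hjj.symm⟩).elim
    · exact (hd (f j) ⟨⟨j'.1, hj'⟩, (congrArg f (Fin.ext rfl)).trans hjj.symm⟩
        ⟨⟨j.1 - k, by have := j.isLt; omega⟩,
          congrArg f (Fin.ext (by show k + ((j : ℕ) - k) = (j : ℕ); omega))⟩).elim
    · have h3 : (⟨j.1 - k, by have := j.isLt; omega⟩ : Fin l)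
          = ⟨j'.1 - k, by have := j'.isLt; omega⟩ := hb (by
        show f _ = f _
        refine (congrArg f (Fin.ext (show k + ((j : ℕ) - k) = (j : ℕ) by omega))).trans
          (hjj.trans (congrArg f (Fin.ext (show (j' : ℕ) = k + ((j' : ℕ) - k) by omega)))))
      simp only [Fin.mk.injEq] at h3
      exact Fin.ext (by omega)

end SplitFacts

section PredSplit

lemma iffB {s c : ℕ} (hsc : (s - c) + c = s) (X CL : Set α) (hCLX : CL ⊆ X)
    (σ : Fin s → α) :
    (Function.Injective σ ∧ Set.range σ = X ∧
        ∀ i : Fin s, s - c ≤ (i : ℕ) → σ i ∈ CL)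
    ↔ ((Function.Injective ((splitEquiv hsc σ).2) ∧ Set.range ((splitEquiv hsc σ).2) ⊆ CL)
       ∧ (Function.Injective ((splitEquiv hsc σ).1) ∧
          Set.range ((splitEquiv hsc σ).1) = X \ Set.range ((splitEquiv hsc σ).2))) := by
  constructor
  · rintro ⟨hinj, hrange, htail⟩
    obtain ⟨ha, hb, hd⟩ := (split_inj_iff hsc σ).mp hinj
    have hU : Set.range ((splitEquiv hsc σ).1) ∪ Set.range ((splitEquiv hsc σ).2) = X :=
      (split_range_eq hsc σ).symm.trans hrange
    refine ⟨⟨hb, ?_⟩, ha, ?_⟩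
    · rintro x ⟨j, rfl⟩
      exact htail ⟨(s - c) + j.1, by have := j.isLt; omega⟩ (by
        show s - c ≤ (s - c) + (j : ℕ); omega)
    · apply subset_antisymm
      · intro x hx
        exact ⟨hU ▸ Set.mem_union_left _ hx, fun hxb => hd x hx hxb⟩
      · rintro x ⟨hxX, hxb⟩
        rcases (hU.symm ▸ hxX : x ∈ _ ∪ _) with hxa | hxb'
        · exact hxa
        · exact absurd hxb' hxb
  · rintro ⟨⟨hb, hbCL⟩, ha, haX⟩
    refine ⟨(split_inj_iff hsc σ).mpr ⟨ha, hb, fun x hxa hxb => by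
        rw [haX] at hxa; exact hxa.2 hxb⟩,
      ?_, ?_⟩
    · rw [split_range_eq hsc σ, haX, Set.diff_union_of_subset (hbCL.trans hCLX)]
    · intro i hi
      have hic : (i : ℕ) - (s - c) < c := by have := i.isLt; omega
      have h4 : (splitEquiv hsc σ).2 ⟨(i : ℕ) - (s - c), hic⟩ = σ i :=
        congrArg σ (Fin.ext (by show (s - c) + ((i : ℕ) - (s - c)) = (i : ℕ); omega))
      exact h4 ▸ hbCL (Set.mem_range_self _)

lemma iffA {n s c : ℕ} (hns : s + (n - s) = n) (M : Matroid α) (X CL : Set α)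
    (hXE : X ⊆ M.E) (π : Fin n → α) :
    ((Function.Injective π ∧ Set.range π = M.E ∧ π '' {j : Fin n | (j : ℕ) < s} = X)
       ∧ ∀ i : Fin n, s - c ≤ (i : ℕ) → (i : ℕ) < s → π i ∈ CL)
    ↔ ((Function.Injective ((splitEquiv hns π).1) ∧ Set.range ((splitEquiv hns π).1) = X ∧
          ∀ i : Fin s, s - c ≤ (i : ℕ) → (splitEquiv hns π).1 i ∈ CL)
       ∧ (Function.Injective ((splitEquiv hns π).2) ∧
          Set.range ((splitEquiv hns π).2) = M.E \ X)) := by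
  constructor
  · rintro ⟨⟨hinj, hrange, himg⟩, htail⟩
    obtain ⟨ha, hb, hd⟩ := (split_inj_iff hns π).mp hinj
    have haX : Set.range ((splitEquiv hns π).1) = X := (split_image_eq hns π).symm.trans himg
    have hU : Set.range ((splitEquiv hns π).1) ∪ Set.range ((splitEquiv hns π).2) = M.E :=
      (split_range_eq hns π).symm.trans hrange
    refine ⟨⟨ha, haX, ?_⟩, hb, ?_⟩
    · intro i hi
      exact htail ⟨i.1, by have := i.isLt; omega⟩ hi i.isLt
    · apply subset_antisymm
      · intro x hx
        refine ⟨hU ▸ Set.mem_union_right _ hx, fun hxX => ?_⟩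
        exact hd x (haX ▸ hxX) hx
      · rintro x ⟨hxE, hxX⟩
        rcases (hU.symm ▸ hxE : x ∈ _ ∪ _) with hxa | hxb
        · exact absurd (haX ▸ hxa) hxX
        · exact hxb
  · rintro ⟨⟨ha, haX, hatail⟩, hb, hbE⟩
    refine ⟨⟨(split_inj_iff hns π).mpr ⟨ha, hb, fun x hxa hxb => by
        rw [hbE] at hxb; rw [haX] at hxa; exact hxb.2 hxa⟩, ?_, ?_⟩, ?_⟩
    · rw [split_range_eq hns π, haX, hbE, Set.union_diff_cancel hXE]
    · rw [split_image_eq hns π, haX]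
    · intro i h1 h2
      have h4 : (splitEquiv hns π).1 ⟨(i : ℕ), h2⟩ = π i := congrArg π (Fin.ext rfl)
      exact h4 ▸ hatail ⟨(i : ℕ), h2⟩ h1

noncomputable def splitPredEquivB {s c : ℕ} (hcs : c ≤ s) (X CL : Set α) (hCLX : CL ⊆ X) :
    {σ : Fin s → α // Function.Injective σ ∧ Set.range σ = X ∧
        ∀ i : Fin s, s - c ≤ (i : ℕ) → σ i ∈ CL}
    ≃ Σ g₂ : {g : Fin c → α // Function.Injective g ∧ Set.range g ⊆ CL},
        {g₁ : Fin (s - c) → α // Function.Injective g₁ ∧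
          Set.range g₁ = X \ Set.range g₂.1} :=
  (Equiv.subtypeEquiv (splitEquiv (show (s - c) + c = s by omega))
    (fun σ => iffB (show (s - c) + c = s by omega) X CL hCLX σ)).trans
    (prodSubtypeSigmaEquiv (fun g => Function.Injective g ∧ Set.range g ⊆ CL)
      (fun g₂ g₁ => Function.Injective g₁ ∧ Set.range g₁ = X \ Set.range g₂))

noncomputable def splitPredEquivA {n s c : ℕ} (hsn : s ≤ n) (M : Matroid α)
    (X CL : Set α) (hXE : X ⊆ M.E) :
    {π : Fin n → α // (Function.Injective π ∧ Set.range π = M.E ∧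
        π '' {j : Fin n | (j : ℕ) < s} = X)
      ∧ ∀ i : Fin n, s - c ≤ (i : ℕ) → (i : ℕ) < s → π i ∈ CL}
    ≃ {σ : Fin s → α // Function.Injective σ ∧ Set.range σ = X ∧
        ∀ i : Fin s, s - c ≤ (i : ℕ) → σ i ∈ CL}
      × {g : Fin (n - s) → α // Function.Injective g ∧ Set.range g = M.E \ X} :=
  (Equiv.subtypeEquiv (splitEquiv (show s + (n - s) = n by omega))
    (fun π => iffA (show s + (n - s) = n by omega) M X CL hXE π)).trans
    (Equiv.subtypeProdEquivProd)

end PredSplit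

section Fiber

lemma finite_of_pred_range {n : ℕ} {S : Set α} (hS : S.Finite)
    (P : (Fin n → α) → Prop) (hP : ∀ f, P f → Set.range f ⊆ S) :
    Finite {f : Fin n → α // P f} := by
  haveI := hS.fintype
  refine Finite.of_injective
    (fun f => (fun i => (⟨f.1 i, hP f.1 f.2 (Set.mem_range_self i)⟩ : ↥S))) ?_
  intro f g hfg
  apply Subtype.ext; funext i
  exact congrArg Subtype.val (congrFun hfg i)

lemma card_fiber (M : Matroid α) (hEfin : M.E.Finite) {n s c : ℕ} (hn : M.E.ncard = n)
    (hsn : s ≤ n) (hcs : c ≤ s) (X : Set α) (hXE : X ⊆ M.E) (hXs : X.ncard = s) :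
    Nat.card {π : Fin n → α // (Function.Injective π ∧ Set.range π = M.E ∧
        π '' {j : Fin n | (j : ℕ) < s} = X)
      ∧ ∀ i : Fin n, s - c ≤ (i : ℕ) → (i : ℕ) < s →
          π i ∈ {e ∈ X | IsColoop (M ↾ X) e}}
    = ({e ∈ X | IsColoop (M ↾ X) e}.ncard).descFactorial c
        * ((s - c).factorial * (n - s).factorial) := by
  classical
  set CL := {e ∈ X | IsColoop (M ↾ X) e} with hCLdef
  have hCLX : CL ⊆ X := fun x hx => hx.1
  have hXfin : X.Finite := hEfin.subset hXE
  have hCLfin : CL.Finite := hXfin.subset hCLX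
  rw [Nat.card_congr (splitPredEquivA hsn M X CL hXE), Nat.card_prod]
  have h2 : Nat.card {g : Fin (n - s) → α //
      Function.Injective g ∧ Set.range g = M.E \ X} = (n - s).factorial := by
    refine card_perm _ (hEfin.diff) ?_
    rw [Set.ncard_diff hXE hXfin, hn, hXs]
  rw [h2, Nat.card_congr (splitPredEquivB hcs X CL hCLX)]
  haveI := hCLfin.to_subtype
  haveI hFemb : Finite {g : Fin c → α // Function.Injective g ∧ Set.range g ⊆ CL} :=
    Finite.of_equiv _ (embEquiv c CL).symm
  letI := Fintype.ofFinite {g : Fin c → α // Function.Injective g ∧ Set.range g ⊆ CL}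
  haveI hFfib : ∀ g₂ : {g : Fin c → α // Function.Injective g ∧ Set.range g ⊆ CL},
      Finite {g₁ : Fin (s - c) → α // Function.Injective g₁ ∧
        Set.range g₁ = X \ Set.range g₂.1} :=
    fun g₂ => by
      haveI := (hXfin.diff (t := Set.range g₂.1)).to_subtype
      exact Finite.of_equiv _ (permEquiv (X \ Set.range g₂.1)).symm
  rw [nat_card_sigma]
  have hterm : ∀ g₂ : {g : Fin c → α // Function.Injective g ∧ Set.range g ⊆ CL},
      Nat.card {g₁ : Fin (s - c) → α // Function.Injective g₁ ∧
        Set.range g₁ = X \ Set.range g₂.1} = (s - c).factorial := by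
    intro g₂
    refine card_perm _ (hXfin.diff) ?_
    have hr : (Set.range g₂.1).ncard = c := by
      rw [← Nat.card_coe_set_eq, Nat.card_range_of_injective g₂.2.1]
      simp
    rw [Set.ncard_diff (g₂.2.2.trans hCLX) (hXfin.subset (g₂.2.2.trans hCLX)), hr, hXs]
  rw [Finset.sum_congr rfl (fun g₂ _ => hterm g₂), Finset.sum_const, Finset.card_univ,
    ← Nat.card_eq_fintype_card, card_emb c CL hCLfin, smul_eq_mul]
  ring

end Fiber

def prefImg (M : Matroid α) (n s c t : ℕ)
    (π' : {π : Fin n → α // (Function.Injective π ∧ Set.range π = M.E) ∧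
        ((π '' {j : Fin n | (j : ℕ) < s} ⊆ M.E ∧
          (π '' {j : Fin n | (j : ℕ) < s}).ncard = s ∧
          rk M (π '' {j : Fin n | (j : ℕ) < s}) = t) ∧
        ∀ i : Fin n, s - c ≤ (i : ℕ) → (i : ℕ) < s →
          π i ∈ {e ∈ π '' {j : Fin n | (j : ℕ) < s} |
            IsColoop (M ↾ (π '' {j : Fin n | (j : ℕ) < s})) e})}) :
    {X : Set α // X ⊆ M.E ∧ X.ncard = s ∧ rk M X = t} :=
  ⟨π'.1 '' {j : Fin n | (j : ℕ) < s}, π'.2.2.1⟩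

lemma fibEquiv (M : Matroid α) (n s c t : ℕ)
    (X : {X : Set α // X ⊆ M.E ∧ X.ncard = s ∧ rk M X = t}) :
    Nonempty ({π' // prefImg M n s c t π' = X}
      ≃ {π : Fin n → α // (Function.Injective π ∧ Set.range π = M.E ∧
          π '' {j : Fin n | (j : ℕ) < s} = X.1)
        ∧ ∀ i : Fin n, s - c ≤ (i : ℕ) → (i : ℕ) < s →
            π i ∈ {e ∈ X.1 | IsColoop (M ↾ X.1) e}}) := by
  refine ⟨((Equiv.subtypeEquivRight (fun π' => ?_)).trans
    ((Equiv.subtypeSubtypeEquivSubtypeInter _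
        (fun f : Fin n → α => f '' {j : Fin n | (j : ℕ) < s} = X.1)).trans
      (Equiv.subtypeEquivRight (fun π => ?_))))⟩
  · exact (Subtype.ext_iff :
      prefImg M n s c t π' = X ↔ π'.1 '' {j : Fin n | (j : ℕ) < s} = X.1)
  · constructor
    · rintro ⟨⟨⟨hinj, hrange⟩, hpred, htail⟩, himg⟩
      rw [himg] at htail
      exact ⟨⟨hinj, hrange, himg⟩, htail⟩
    · rintro ⟨⟨hinj, hrange, himg⟩, htail⟩
      rw [← himg] at htail
      refine ⟨⟨⟨hinj, hrange⟩, ?_, htail⟩, himg⟩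
      rw [himg]
      exact X.2

lemma card_Q_eq_sum (M : Matroid α) (hfin : M.E.Finite) {n s c t : ℕ} (hn : M.E.ncard = n)
    (hsn : s ≤ n) (hcs' : c ≤ s)
    [Fintype {X : Set α // X ⊆ M.E ∧ X.ncard = s ∧ rk M X = t}] :
    Nat.card {π : Fin n → α // (Function.Injective π ∧ Set.range π = M.E) ∧
        ((π '' {j : Fin n | (j : ℕ) < s} ⊆ M.E ∧
          (π '' {j : Fin n | (j : ℕ) < s}).ncard = s ∧
          rk M (π '' {j : Fin n | (j : ℕ) < s}) = t) ∧
        ∀ i : Fin n, s - c ≤ (i : ℕ) → (i : ℕ) < s →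
          π i ∈ {e ∈ π '' {j : Fin n | (j : ℕ) < s} |
            IsColoop (M ↾ (π '' {j : Fin n | (j : ℕ) < s})) e})}
    = ∑ X : {X : Set α // X ⊆ M.E ∧ X.ncard = s ∧ rk M X = t},
        ({e ∈ X.1 | IsColoop (M ↾ X.1) e}.ncard).descFactorial c
          * ((s - c).factorial * (n - s).factorial) := by
  classical
  rw [Nat.card_congr (Equiv.sigmaFiberEquiv (prefImg M n s c t)).symm]
  haveI hFibFin : ∀ X : {X : Set α // X ⊆ M.E ∧ X.ncard = s ∧ rk M X = t},
      Finite {π : Fin n → α // (Function.Injective π ∧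
        Set.range π = M.E ∧ π '' {j : Fin n | (j : ℕ) < s} = X.1)
        ∧ ∀ i : Fin n, s - c ≤ (i : ℕ) → (i : ℕ) < s →
            π i ∈ {e ∈ X.1 | IsColoop (M ↾ X.1) e}} :=
    fun X => finite_of_pred_range hfin _ (fun f hf => hf.1.2.1 ▸ subset_rfl)
  haveI : ∀ X : {X : Set α // X ⊆ M.E ∧ X.ncard = s ∧ rk M X = t},
      Finite {π' // prefImg M n s c t π' = X} :=
    fun X => Finite.of_equiv _ (fibEquiv M n s c t X).some.symm
  rw [nat_card_sigma]
  refine Finset.sum_congr rfl (fun X _ => ?_)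
  rw [Nat.card_congr (fibEquiv M n s c t X).some]
  exact card_fiber M hfin hn hsn hcs' X.1 X.2.1 X.2.2.1

/-- The counting identity relating the size-rank-coloop data `F(s,t,c)` to the
rank-sequence data `G(s,t,c)`:
`∑_{c' ≥ c} F(s,t,c')·C(c',c)·c!·(s-c)!·(n-s)! = G(s,t,c)`. -/
theorem size_rank_coloop_count (M : Matroid α) (hfin : M.E.Finite) (n : ℕ)
    (hn : M.E.ncard = n) (s t c : ℕ) (hcs : c ≤ t) (hts : t ≤ s) (hsn : s ≤ n) :
    ∑ c' ∈ Finset.Icc c n,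
      (Nat.card {X : Set α // X ⊆ M.E ∧ X.ncard = s ∧ rk M X = t ∧
          {e ∈ X | IsColoop (M ↾ X) e}.ncard = c'})
        * (c'.choose c) * c.factorial * (s - c).factorial * (n - s).factorial
    = Nat.card {π : Fin n → α // Function.Injective π ∧ Set.range π = M.E ∧
        {i : Fin n | (i : ℕ) < s ∧
          rk M (π '' {j | j ≤ i}) = rk M (π '' {j | j < i}) + 1}.ncard = t ∧
        ∀ i : Fin n, s - c ≤ (i : ℕ) → (i : ℕ) < s →
          rk M (π '' {j | j ≤ i}) = rk M (π '' {j | j < i}) + 1} := by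
  classical
  have hcs' : c ≤ s := hcs.trans hts
  -- the prefix-image map
  have hprefmem : ∀ π : Fin n → α, Function.Injective π → Set.range π = M.E →
      π '' {j : Fin n | (j : ℕ) < s} ⊆ M.E ∧ (π '' {j : Fin n | (j : ℕ) < s}).ncard = s := by
    intro π hinj hrange
    refine ⟨prefix_subset_ground hrange s, ?_⟩
    rw [Set.ncard_image_of_injective _ hinj]
    have hseteq : {j : Fin n | (j : ℕ) < s} = {j : Fin n | 0 ≤ (j : ℕ) ∧ (j : ℕ) < s} := by
      ext j; simp
    rw [hseteq, ncard_fin_interval hsn]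
    omega
  -- Step 1: master iff
  have hQiff : ∀ π : Fin n → α,
      (Function.Injective π ∧ Set.range π = M.E ∧
        {i : Fin n | (i : ℕ) < s ∧
          rk M (π '' {j | j ≤ i}) = rk M (π '' {j | j < i}) + 1}.ncard = t ∧
        ∀ i : Fin n, s - c ≤ (i : ℕ) → (i : ℕ) < s →
          rk M (π '' {j | j ≤ i}) = rk M (π '' {j | j < i}) + 1)
      ↔ ((Function.Injective π ∧ Set.range π = M.E) ∧
          ((π '' {j : Fin n | (j : ℕ) < s} ⊆ M.E ∧
            (π '' {j : Fin n | (j : ℕ) < s}).ncard = s ∧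
            rk M (π '' {j : Fin n | (j : ℕ) < s}) = t) ∧
          ∀ i : Fin n, s - c ≤ (i : ℕ) → (i : ℕ) < s →
            π i ∈ {e ∈ π '' {j : Fin n | (j : ℕ) < s} |
              IsColoop (M ↾ (π '' {j : Fin n | (j : ℕ) < s})) e})) := by
    intro π
    constructor
    · rintro ⟨hinj, hrange, ht, htail⟩
      have hncd : {i : Fin n | (i : ℕ) < s ∧
          rk M (π '' {j | j ≤ i}) = rk M (π '' {j | j < i}) + 1}.ncard
          = (Finset.univ.filter fun i : Fin n => (i : ℕ) < s ∧
              rk M (π '' {j | j ≤ i}) = rk M (π '' {j | j < i}) + 1).card := by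
        rw [Set.ncard_eq_toFinset_card']
        congr 1
        simp [Set.toFinset_setOf]
      rw [hncd, telescope hrange hfin hsn] at ht
      exact ⟨⟨hinj, hrange⟩, ⟨(hprefmem π hinj hrange).1, (hprefmem π hinj hrange).2, ht⟩,
        (tail_iff hinj hrange hfin hsn hcs').mp htail⟩
    · rintro ⟨⟨hinj, hrange⟩, ⟨hsub, hcard, hrk⟩, htail⟩
      refine ⟨hinj, hrange, ?_, (tail_iff hinj hrange hfin hsn hcs').mpr htail⟩
      have hncd : {i : Fin n | (i : ℕ) < s ∧
          rk M (π '' {j | j ≤ i}) = rk M (π '' {j | j < i}) + 1}.ncard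
          = (Finset.univ.filter fun i : Fin n => (i : ℕ) < s ∧
              rk M (π '' {j | j ≤ i}) = rk M (π '' {j | j < i}) + 1).card := by
        rw [Set.ncard_eq_toFinset_card']
        congr 1
        simp [Set.toFinset_setOf]
      rw [hncd, telescope hrange hfin hsn]
      exact hrk
  rw [Nat.card_congr (Equiv.subtypeEquivRight hQiff)]
  haveI hFAfin : Finite {X : Set α // X ⊆ M.E ∧ X.ncard = s ∧ rk M X = t} := by
    have h1 : {X : Set α | X ⊆ M.E ∧ X.ncard = s ∧ rk M X = t}.Finite :=
      hfin.finite_subsets.subset (fun X hX => hX.1)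
    exact h1.to_subtype
  letI := Fintype.ofFinite {X : Set α // X ⊆ M.E ∧ X.ncard = s ∧ rk M X = t}
  rw [card_Q_eq_sum M hfin hn hsn hcs']
  -- Step 3: regroup by coloop number
  have hccle : ∀ X : {X : Set α // X ⊆ M.E ∧ X.ncard = s ∧ rk M X = t}, {e ∈ X.1 | IsColoop (M ↾ X.1) e}.ncard ∈ Finset.Icc 0 n := by
    intro X
    simp only [Finset.mem_Icc]
    refine ⟨Nat.zero_le _, ?_⟩
    rw [← hn]
    exact Set.ncard_le_ncard (fun x hx => X.2.1 hx.1) hfin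
  have hfiber := Finset.sum_fiberwise_of_maps_to (s := Finset.univ) (g := fun X : {X : Set α // X ⊆ M.E ∧ X.ncard = s ∧ rk M X = t} =>
      {e ∈ X.1 | IsColoop (M ↾ X.1) e}.ncard) (fun X _ => hccle X)
    (fun X : {X : Set α // X ⊆ M.E ∧ X.ncard = s ∧ rk M X = t} => ({e ∈ X.1 | IsColoop (M ↾ X.1) e}.ncard).descFactorial c
        * ((s - c).factorial * (n - s).factorial))
  rw [← hfiber]
  -- each inner sum
  have hinner : ∀ c' ∈ Finset.Icc 0 n,
      ∑ X ∈ Finset.univ.filter (fun X : {X : Set α // X ⊆ M.E ∧ X.ncard = s ∧ rk M X = t} =>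
          {e ∈ X.1 | IsColoop (M ↾ X.1) e}.ncard = c'),
        ({e ∈ X.1 | IsColoop (M ↾ X.1) e}.ncard).descFactorial c
          * ((s - c).factorial * (n - s).factorial)
      = (Finset.univ.filter (fun X : {X : Set α // X ⊆ M.E ∧ X.ncard = s ∧ rk M X = t} =>
          {e ∈ X.1 | IsColoop (M ↾ X.1) e}.ncard = c')).card
        * (c'.descFactorial c * ((s - c).factorial * (n - s).factorial)) := by
    intro c' _
    rw [Finset.sum_congr rfl (fun X hX => by
      rw [(Finset.mem_filter.mp hX).2]), Finset.sum_const, smul_eq_mul]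
  rw [Finset.sum_congr rfl hinner]
  -- identify filter cards with Nat.card of the statement subtypes
  have hNcard : ∀ c' : ℕ, (Finset.univ.filter (fun X : {X : Set α // X ⊆ M.E ∧ X.ncard = s ∧ rk M X = t} =>
      {e ∈ X.1 | IsColoop (M ↾ X.1) e}.ncard = c')).card
      = Nat.card {X : Set α // X ⊆ M.E ∧ X.ncard = s ∧ rk M X = t ∧
          {e ∈ X | IsColoop (M ↾ X) e}.ncard = c'} := by
    intro c'
    rw [← Fintype.card_subtype, ← Nat.card_eq_fintype_card]
    refine Nat.card_congr ((Equiv.subtypeSubtypeEquivSubtypeInter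
        (fun X : Set α => X ⊆ M.E ∧ X.ncard = s ∧ rk M X = t)
        (fun X : Set α => {e ∈ X | IsColoop (M ↾ X) e}.ncard = c')).trans
      (Equiv.subtypeEquivRight (fun X => ?_)))
    constructor
    · rintro ⟨⟨h1, h2, h3⟩, h4⟩; exact ⟨h1, h2, h3, h4⟩
    · rintro ⟨h1, h2, h3, h4⟩; exact ⟨⟨h1, h2, h3⟩, h4⟩
  -- final arithmetic: compare the two sums over Icc
  have hext : ∑ c' ∈ Finset.Icc c n,
      (Nat.card {X : Set α // X ⊆ M.E ∧ X.ncard = s ∧ rk M X = t ∧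
          {e ∈ X | IsColoop (M ↾ X) e}.ncard = c'})
        * (c'.choose c) * c.factorial * (s - c).factorial * (n - s).factorial
      = ∑ c' ∈ Finset.Icc 0 n,
      (Nat.card {X : Set α // X ⊆ M.E ∧ X.ncard = s ∧ rk M X = t ∧
          {e ∈ X | IsColoop (M ↾ X) e}.ncard = c'})
        * (c'.choose c) * c.factorial * (s - c).factorial * (n - s).factorial := by
    refine Finset.sum_subset ?_ ?_
    · intro x hx
      simp only [Finset.mem_Icc] at *
      omega
    · intro x hx hx2
      simp only [Finset.mem_Icc] at hx hx2
      have hxc : x < c := by omega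
      rw [Nat.choose_eq_zero_of_lt hxc]
      ring
  rw [hext]
  refine Finset.sum_congr rfl (fun c' _ => ?_)
  rw [hNcard c', Nat.descFactorial_eq_factorial_mul_choose]
  ring

end ConePaper
end

section
/- Let M be a loopless matroid on E, m ≥ 1, and Q = Q_m(M) with tip a. For any S ⊆ E(Q) with a ∈ cl_Q(S), the closure cl_Q(S) equals q(F) for some flat F of M, namely F = cl_M(p(S)). -/
open Set Matroid

namespace ConePaper

variable {α : Type*}

/-! `Q` is known only through its cyclic flats. Cones have rank at least `2`, so the cyclic flats
of `Q` of rank at most `1` are cyclic flats of `M`; hence `Q` is loopless and every point outside `E`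
is closed in `Q`. So any two of `a`, `e`, `t ∈ T e` span the rank-`2` flat `q(cl_M {e})`. A flat `K`
of `Q` containing `a` and some other point thus contains, with each of its points, such a triangle
through it, so `K` is a cyclic flat containing `a`, i.e. a cone `q(F)` over a flat `F` of `M`.
Finally `p(S) ⊆ F`, and `S` lies in the flat `q(cl_M p(S)) ⊆ q(F)`, which squeezes `cl_Q S`. -/

lemma rk_eq_eRk {N : Matroid α} {X : Set α} (hX : X.Finite) : (rk N X : ℕ∞) = N.eRk X := by
  obtain ⟨I, hI⟩ := N.exists_isBasis' X
  have hmax : IsGreatest {n : ℕ | ∃ J, N.Indep J ∧ J ⊆ X ∧ J.ncard = n} I.ncard := by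
    refine ⟨⟨I, hI.indep, hI.subset, rfl⟩, ?_⟩
    rintro n ⟨J, hJ, hJX, rfl⟩
    have h := hJ.encard_le_eRk_of_subset hJX
    rwa [← hI.encard_eq_eRk, ← (hX.subset hJX).cast_ncard_eq,
      ← (hX.subset hI.subset).cast_ncard_eq, Nat.cast_le] at h
  rw [rk, hmax.csSup_eq, (hX.subset hI.subset).cast_ncard_eq, hI.encard_eq_eRk]

lemma cyclicFlat_of_forall_mem_closure_diff {N : Matroid α} {K : Set α} (hK : N.IsFlat K)
    (h : ∀ z ∈ K, z ∈ N.closure (K \ {z})) : CyclicFlat N K := by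
  refine ⟨hK, fun z hz hco => ?_⟩
  have hco' : (N ↾ K).IsColoop z := isColoop_iff_forall_mem_isBase.2 hco.2
  rw [isColoop_iff_notMem_closure_compl hco.1, restrict_ground_eq,
    restrict_closure_eq _ sdiff_subset hK.subset_ground] at hco'
  exact hco' ⟨h z hz, hz⟩

section Cone

variable {T : α → Set α} {a : α} {S F : Set α}

lemma subset_cone : S ⊆ cone T a S :=
  subset_union_left.trans subset_union_left

lemma tip_mem_cone : a ∈ cone T a S :=
  Or.inl (Or.inr rfl)

lemma mem_cone_of_mem_T {e t : α} (he : e ∈ S) (ht : t ∈ T e) : t ∈ cone T a S :=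
  Or.inr (mem_biUnion he ht)

lemma cone_mono (h : S ⊆ F) : cone T a S ⊆ cone T a F :=
  union_subset_union (union_subset_union_left _ h) (biUnion_mono h fun _ _ => Subset.rfl)

lemma mem_cone {x : α} : x ∈ cone T a S ↔ x ∈ S ∨ x = a ∨ ∃ e ∈ S, x ∈ T e := by
  simp only [cone, mem_union, mem_singleton_iff, mem_iUnion, exists_prop, or_assoc]

@[simp] lemma cone_empty : cone T a ∅ = {a} := by
  simp [cone]

lemma proj_subset {E : Set α} : proj E T S ⊆ E :=
  union_subset inter_subset_right (sep_subset _ _)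

end Cone

namespace FreeCone

variable {M Q : Matroid α} {T : α → Set α} {a : α} {m : ℕ} {e t x y : α} {F K S : Set α}

lemma ground_finite (hFC : FreeCone M Q T a m) : Q.E.Finite := by
  rw [hFC.hQE]
  exact (hFC.hMfin.union (hFC.hMfin.biUnion hFC.hTfin)).union (finite_singleton a)

lemma tip_mem_ground (hFC : FreeCone M Q T a m) : a ∈ Q.E := by
  rw [hFC.hQE]; exact Or.inr rfl

lemma tip_notMem (hFC : FreeCone M Q T a m) : a ∉ M.E :=
  fun h => hFC.ha (Or.inl h)

lemma tip_notMem_T (hFC : FreeCone M Q T a m) (he : e ∈ M.E) : a ∉ T e :=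
  fun h => hFC.ha (Or.inr (mem_biUnion he h))

lemma notMem_of_mem_T (hFC : FreeCone M Q T a m) (he : e ∈ M.E) (ht : t ∈ T e) : t ∉ M.E :=
  disjoint_left.1 (hFC.hTdisjE e he) ht

lemma T_nonempty (hFC : FreeCone M Q T a m) (he : e ∈ M.E) : (T e).Nonempty :=
  nonempty_of_ncard_ne_zero (by rw [hFC.hTcard e he]; exact (Nat.one_le_iff_ne_zero.1 hFC.hm))

lemma exists_mem_T_of_ne_tip (hFC : FreeCone M Q T a m) (hx : x ∈ Q.E) (hxa : x ≠ a) :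
    ∃ e ∈ M.E, ∃ t ∈ T e, x = e ∨ x = t := by
  rw [hFC.hQE] at hx
  rcases hx with (hxE | hxT) | rfl
  · obtain ⟨t, ht⟩ := hFC.T_nonempty hxE
    exact ⟨x, hxE, t, ht, Or.inl rfl⟩
  · obtain ⟨e, he, hxe⟩ := mem_iUnion₂.1 hxT
    exact ⟨e, he, x, hxe, Or.inr rfl⟩
  · exact absurd rfl hxa

lemma cone_subset_ground (hFC : FreeCone M Q T a m) (hF : F ⊆ M.E) : cone T a F ⊆ Q.E := by
  rw [hFC.hQE]
  rintro x ((hx | rfl) | hx)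
  · exact Or.inl (Or.inl (hF hx))
  · exact Or.inr rfl
  · exact Or.inl (Or.inr (biUnion_mono hF (fun _ _ => Subset.rfl) hx))

lemma subset_cone_proj (hFC : FreeCone M Q T a m) (hS : S ⊆ Q.E) :
    S ⊆ cone T a (proj M.E T S) := by
  intro s hs
  have hsE := hS hs
  rw [hFC.hQE] at hsE
  rcases hsE with (hsE | hsT) | rfl
  · exact subset_cone (Or.inl ⟨hs, hsE⟩)
  · obtain ⟨e, he, hse⟩ := mem_iUnion₂.1 hsT
    exact mem_cone_of_mem_T (Or.inr ⟨he, s, hs, hse⟩) hse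
  · exact tip_mem_cone

lemma proj_subset_of_subset_cone (hFC : FreeCone M Q T a m) (hF : F ⊆ M.E)
    (hS : S ⊆ cone T a F) : proj M.E T S ⊆ F := by
  rintro e (⟨hs, he⟩ | ⟨he, t, ht, hte⟩)
  · rcases mem_cone.1 (hS hs) with heF | rfl | ⟨f, hf, hef⟩
    exacts [heF, absurd he hFC.tip_notMem, absurd he (hFC.notMem_of_mem_T (hF hf) hef)]
  · rcases mem_cone.1 (hS ht) with htF | rfl | ⟨f, hf, htf⟩
    · exact absurd (hF htF) (hFC.notMem_of_mem_T he hte)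
    · exact absurd hte (hFC.tip_notMem_T he)
    · by_contra hef
      exact disjoint_left.1 (hFC.hTdisj e he f (hF hf) (by rintro rfl; exact hef hf)) hte htf

lemma base_loopless (hFC : FreeCone M Q T a m) : M.Loopless :=
  loopless_iff_forall_isNonloop.2 fun e he => indep_singleton.1 (hFC.hloopless e he)

lemma eRk_cyclicFlat (hFC : FreeCone M Q T a m) (hF : CyclicFlat M F) :
    Q.eRk F = M.eRk F := by
  have hfin := hFC.hMfin.subset hF.1.subset_ground
  rw [← rk_eq_eRk hfin, ← rk_eq_eRk hfin, hFC.hrank1 F hF]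

lemma eRk_cone (hFC : FreeCone M Q T a m) (hF : M.IsFlat F) (hne : F.Nonempty) :
    Q.eRk (cone T a F) = M.eRk F + 1 := by
  rw [← rk_eq_eRk (hFC.ground_finite.subset (hFC.cone_subset_ground hF.subset_ground)),
    ← rk_eq_eRk (hFC.hMfin.subset hF.subset_ground), hFC.hrank2 F hF hne]
  norm_cast

lemma one_le_eRk (hFC : FreeCone M Q T a m) (hF : F ⊆ M.E) (hne : F.Nonempty) :
    1 ≤ M.eRk F := by
  have := hFC.base_loopless
  obtain ⟨e, he⟩ := hne
  rw [← M.eRk_singleton_eq (hF he)]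
  exact M.eRk_mono (singleton_subset_iff.2 he)

lemma cyclicFlat_of_eRk_le_one (hFC : FreeCone M Q T a m) (hF : CyclicFlat Q F)
    (hr : Q.eRk F ≤ 1) : CyclicFlat M F := by
  refine ((hFC.hcyclic F).1 hF).resolve_right ?_
  rintro ⟨F', hF', hne, rfl⟩
  have := hFC.one_le_eRk hF'.subset_ground hne
  rw [hFC.eRk_cone hF' hne] at hr
  have h2 : (2 : ℕ∞) ≤ 1 := (add_le_add_left this 1).trans hr
  norm_num at h2

lemma loopless (hFC : FreeCone M Q T a m) : Q.Loopless := by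
  have hcyc : CyclicFlat Q Q.loops := cyclicFlat_of_forall_mem_closure_diff (Q.isFlat_closure ∅)
    fun z hz => Q.closure_subset_closure (empty_subset _) hz
  have hM := hFC.cyclicFlat_of_eRk_le_one hcyc (by simp [eRk_loops])
  rw [loopless_iff, ← not_nonempty_iff_eq_empty]
  intro hne
  have := hFC.one_le_eRk hM.1.subset_ground hne
  rw [← hFC.eRk_cyclicFlat hM, eRk_loops] at this
  simp at this

lemma mem_ground_of_mem_closure_singleton (hFC : FreeCone M Q T a m) (hx : x ∈ Q.E)
    (hy : y ∈ Q.closure {x}) (hyx : y ≠ x) : x ∈ M.E ∧ y ∈ M.E := by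
  have := hFC.loopless
  have hcyc : CyclicFlat Q (Q.closure {x}) := by
    refine cyclicFlat_of_forall_mem_closure_diff (Q.isFlat_closure _) fun z hz => ?_
    by_cases hzx : z = x
    · subst hzx
      have hzy : z ∈ Q.closure {y} := by
        simpa using Q.mem_closure_insert (X := ∅) (e := y) (f := z)
          (by rw [closure_empty, loops_eq_empty]; exact notMem_empty y) (by simpa using hy)
      have hy' : y ∈ Q.closure {z} \ {z} := ⟨hy, hyx⟩
      exact Q.closure_subset_closure (singleton_subset_iff.2 hy') hzy
    · have hx' : x ∈ Q.closure {x} \ {z} := ⟨Q.mem_closure_self x hx, Ne.symm hzx⟩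
      exact Q.closure_subset_closure (singleton_subset_iff.2 hx') hz
  have hM := hFC.cyclicFlat_of_eRk_le_one hcyc (by simp)
  exact ⟨hM.1.subset_ground (Q.mem_closure_self x hx), hM.1.subset_ground hy⟩

lemma closure_tip (hFC : FreeCone M Q T a m) : Q.closure {a} = {a} := by
  refine subset_antisymm (fun y hy => ?_) (Q.subset_closure _ (by simpa using hFC.tip_mem_ground))
  by_contra hya
  exact hFC.tip_notMem (hFC.mem_ground_of_mem_closure_singleton hFC.tip_mem_ground hy hya).1

lemma isFlat_cone (hFC : FreeCone M Q T a m) (hF : M.IsFlat F) : Q.IsFlat (cone T a F) := by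
  obtain rfl | hne := F.eq_empty_or_nonempty
  · rw [cone_empty, ← hFC.closure_tip]
    exact Q.isFlat_closure _
  · exact ((hFC.hcyclic _).2 (Or.inr ⟨F, hF, hne, rfl⟩)).1

lemma eRk_line (hFC : FreeCone M Q T a m) (he : e ∈ M.E) :
    Q.eRk (cone T a (M.closure {e})) = 2 := by
  have := hFC.base_loopless
  rw [hFC.eRk_cone (M.isFlat_closure _) ⟨e, M.mem_closure_self e he⟩, eRk_closure_eq,
    eRk_singleton_eq]
  rfl

lemma closure_pair_eq_line (hFC : FreeCone M Q T a m) (he : e ∈ M.E)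
    (hx : x ∈ cone T a (M.closure {e})) (hy : y ∈ cone T a (M.closure {e})) (hxy : x ≠ y)
    (hxyE : x ∉ M.E ∨ y ∉ M.E) : Q.closure {x, y} = cone T a (M.closure {e}) := by
  have := hFC.loopless
  have hL := hFC.cone_subset_ground (M.closure_subset_ground {e})
  have hyx : y ∉ Q.closure {x} := fun h =>
    hxyE.elim (· (hFC.mem_ground_of_mem_closure_singleton (hL hx) h hxy.symm).1)
      (· (hFC.mem_ground_of_mem_closure_singleton (hL hx) h hxy.symm).2)
  have hr : Q.eRk {x, y} = 2 := by
    rw [pair_comm, eRk_insert_eq_add_one ⟨hL hy, hyx⟩, eRk_singleton_eq (hL hx)]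
    rfl
  rw [IsRkFinite.closure_eq_closure_of_subset_of_eRk_ge_eRk
    (Q.isRkFinite_of_finite (toFinite _)) (pair_subset hx hy) (by rw [hr, hFC.eRk_line he]),
    (hFC.isFlat_cone (M.isFlat_closure _)).closure]

lemma mem_closure_triangle_diff (hFC : FreeCone M Q T a m) (he : e ∈ M.E) (ht : t ∈ T e)
    {z : α} (hz : z ∈ ({a, e, t} : Set α)) : z ∈ Q.closure ({a, e, t} \ {z}) := by
  have hL : ({a, e, t} : Set α) ⊆ cone T a (M.closure {e}) :=
    insert_subset tip_mem_cone (pair_subset (subset_cone (M.mem_closure_self e he))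
      (mem_cone_of_mem_T (M.mem_closure_self e he) ht))
  have hspan : ∀ x y, ({x, y} : Set α) ⊆ {a, e, t} \ {z} → x ≠ y → (x ∉ M.E ∨ y ∉ M.E) →
      z ∈ Q.closure ({a, e, t} \ {z}) := fun x y hxy hne hxyE =>
    Q.closure_subset_closure hxy <| by
      rw [hFC.closure_pair_eq_line he (hL (hxy.trans sdiff_subset (mem_insert x _)))
        (hL (hxy.trans sdiff_subset (mem_insert_of_mem x rfl))) hne hxyE]
      exact hL hz
  have hae : a ≠ e := fun h => hFC.tip_notMem (h ▸ he)
  have hat : a ≠ t := fun h => hFC.tip_notMem_T he (h ▸ ht)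
  have het : e ≠ t := fun h => hFC.notMem_of_mem_T he ht (h ▸ he)
  rcases hz with rfl | rfl | rfl
  · exact hspan e t (by simp [insert_subset_iff, hae.symm, hat.symm]) het
      (Or.inr (hFC.notMem_of_mem_T he ht))
  · exact hspan a t (by simp [insert_subset_iff, hae, het.symm]) hat (Or.inl hFC.tip_notMem)
  · exact hspan a e (by simp [insert_subset_iff, hat, het]) hae (Or.inl hFC.tip_notMem)

lemma line_subset_of_tip_mem (hFC : FreeCone M Q T a m) (hK : Q.IsFlat K) (haK : a ∈ K)
    (he : e ∈ M.E) (ht : t ∈ T e) {u : α} (hu : u = e ∨ u = t) (huK : u ∈ K) :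
    cone T a (M.closure {e}) ⊆ K := by
  have huL : u ∈ cone T a (M.closure {e}) := by
    rcases hu with rfl | rfl
    exacts [subset_cone (M.mem_closure_self u he), mem_cone_of_mem_T (M.mem_closure_self e he) ht]
  have hau : a ≠ u := fun h => by
    rcases hu with rfl | rfl
    exacts [hFC.tip_notMem (h ▸ he), hFC.tip_notMem_T he (h ▸ ht)]
  rw [← hFC.closure_pair_eq_line he tip_mem_cone huL hau (Or.inl hFC.tip_notMem), ← hK.closure]
  exact Q.closure_subset_closure (pair_subset haK huK)

lemma cyclicFlat_of_tip_mem (hFC : FreeCone M Q T a m) (hK : Q.IsFlat K) (haK : a ∈ K)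
    {w : α} (hwK : w ∈ K) (hwa : w ≠ a) : CyclicFlat Q K := by
  refine cyclicFlat_of_forall_mem_closure_diff hK fun z hzK => ?_
  obtain ⟨u, huK, hua, hzu⟩ : ∃ u ∈ K, u ≠ a ∧ (z = a ∨ z = u) := by
    by_cases hza : z = a
    exacts [⟨w, hwK, hwa, Or.inl hza⟩, ⟨z, hzK, hza, Or.inr rfl⟩]
  obtain ⟨e, he, t, ht, hu⟩ := hFC.exists_mem_T_of_ne_tip (hK.subset_ground huK) hua
  have hL := hFC.line_subset_of_tip_mem hK haK he ht hu huK
  have htri : ({a, e, t} : Set α) ⊆ K :=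
    insert_subset haK (pair_subset (hL (subset_cone (M.mem_closure_self e he)))
      (hL (mem_cone_of_mem_T (M.mem_closure_self e he) ht)))
  have hz : z ∈ ({a, e, t} : Set α) := by
    rcases hzu with rfl | rfl
    · exact mem_insert z _
    · rcases hu with rfl | rfl <;> simp
  exact Q.closure_subset_closure (sdiff_subset_sdiff_left htri)
    (hFC.mem_closure_triangle_diff he ht hz)

lemma exists_eq_cone_of_tip_mem (hFC : FreeCone M Q T a m) (hK : Q.IsFlat K) (haK : a ∈ K) :
    ∃ F, M.IsFlat F ∧ K = cone T a F := by
  by_cases hKa : ∃ w ∈ K, w ≠ a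
  · obtain ⟨w, hwK, hwa⟩ := hKa
    rcases (hFC.hcyclic K).1 (hFC.cyclicFlat_of_tip_mem hK haK hwK hwa) with hM | hcone
    exacts [absurd (hM.1.subset_ground haK) hFC.tip_notMem, hcone.imp fun F hF => ⟨hF.1, hF.2.2⟩]
  · push Not at hKa
    have := hFC.base_loopless
    refine ⟨∅, ?_, by rw [cone_empty]; exact subset_antisymm hKa (singleton_subset_iff.2 haK)⟩
    have h0 : M.closure ∅ = ∅ := by rw [closure_empty, loops_eq_empty]
    exact h0 ▸ M.isFlat_closure ∅

end FreeCone

/-- If the tip lies in `cl_Q(S)`, then `cl_Q(S)` is the cone of the flat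
`cl_M(p(S))` of `M`. -/
theorem closure_with_tip_is_cone {M Q : Matroid α} {T : α → Set α} {a : α} {m : ℕ}
    (hFC : FreeCone M Q T a m) (S : Set α) (hS : S ⊆ Q.E) (haS : a ∈ Q.closure S) :
    Q.closure S = cone T a (M.closure (proj M.E T S)) ∧
      M.IsFlat (M.closure (proj M.E T S)) := by
  obtain ⟨F, hF, hcl⟩ := hFC.exists_eq_cone_of_tip_mem (Q.isFlat_closure S) haS
  have hpF : proj M.E T S ⊆ F :=
    hFC.proj_subset_of_subset_cone hF.subset_ground (hcl ▸ Q.subset_closure S hS)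
  have hGF : M.closure (proj M.E T S) ⊆ F := hF.closure ▸ M.closure_subset_closure hpF
  have hSG : S ⊆ cone T a (M.closure (proj M.E T S)) :=
    (hFC.subset_cone_proj hS).trans (cone_mono (M.subset_closure _ proj_subset))
  refine ⟨subset_antisymm ?_ (hcl ▸ cone_mono hGF), M.isFlat_closure _⟩
  exact (hFC.isFlat_cone (M.isFlat_closure _)).closure ▸ Q.closure_subset_closure hSG

end ConePaper
end
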